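/- Let (g, ·) be a commutative associative algebra over a field K and D : g → g a derivation. Then: (1) the bracket [x,y]_D = D(x)·y − D(y)·x makes g into a Lie algebra; and (2) if N : g → g is a Nijenhuis operator on the associative algebra (g, ·) satisfying D∘N = N∘D, then N is a Nijenhuis operator on the Lie algebra (g, [·,·]_D), i.e. [Nx, Ny]_D = N([Nx, y]_D + [x, Ny]_D − N[x, y]_D) for all x, y ∈ g. -/

import Mathlib

/-!
Leibniz rule and commutativity give `D [y, z]_D = D²y · z − D²z · y`, since the terms
`D y · D z` and `D z · D y` cancel; with this the Jacobi identity becomes an identity of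
commutative polynomials. For the Nijenhuis part, `D ∘ N = N ∘ D` turns `[N x, N y]_D` into
`N (D x) · N y − N (D y) · N x`, and the associative Nijenhuis identity applied to each
product yields the required expression after collecting terms under the additive `N`.
-/

/-- `br` is a Lie algebra bracket over `K`: bilinear, alternating, Jacobi/Leibniz. -/
def IsLieBracket (K : Type*) [Field K] {A : Type*} [AddCommGroup A] [Module K A]
    (br : A → A → A) : Prop :=
  (∀ x₁ x₂ y, br (x₁ + x₂) y = br x₁ y + br x₂ y) ∧
  (∀ (c : K) (x y : A), br (c • x) y = c • br x y) ∧
  (∀ x y₁ y₂, br x (y₁ + y₂) = br x y₁ + br x y₂) ∧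
  (∀ (c : K) (x y : A), br x (c • y) = c • br x y) ∧
  (∀ x, br x x = 0) ∧
  (∀ x y z, br x (br y z) = br (br x y) z + br y (br x z))

def derivationBracket {A : Type*} [Mul A] [Sub A] (D : A → A) (x y : A) : A :=
  D x * y - D y * x

def IsNijenhuis {A : Type*} [Add A] [Sub A] (μ : A → A → A) (N : A → A) : Prop :=
  ∀ x y, μ (N x) (N y) = N (μ (N x) y + μ x (N y) - N (μ x y))

theorem map_derivationBracket {A : Type*} [NonUnitalCommRing A] (D : A →+ A)
    (hD : ∀ x y, D (x * y) = D x * y + x * D y) (x y : A) :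
    D (derivationBracket D x y) = D (D x) * y - D (D y) * x := by
  rw [derivationBracket, map_sub, hD, hD, mul_comm (D y) (D x)]
  abel

theorem derivationBracket_jacobi {A : Type*} [NonUnitalCommRing A] (D : A →+ A)
    (hD : ∀ x y, D (x * y) = D x * y + x * D y) (x y z : A) :
    derivationBracket D x (derivationBracket D y z)
      = derivationBracket D (derivationBracket D x y) z
        + derivationBracket D y (derivationBracket D x z) := by
  have hD' := map_derivationBracket D hD
  unfold derivationBracket at hD' ⊢
  simp only [hD', mul_sub, sub_mul]
  simp only [mul_comm, mul_left_comm]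
  abel

theorem isLieBracket_derivationBracket {K A : Type*} [Field K] [NonUnitalCommRing A] [Module K A]
    [SMulCommClass K A A] [IsScalarTower K A A]
    (D : A →ₗ[K] A) (hD : ∀ x y, D (x * y) = D x * y + x * D y) :
    IsLieBracket K (derivationBracket D) := by
  refine ⟨fun x₁ x₂ y => ?_, fun c x y => ?_, fun x y₁ y₂ => ?_, fun c x y => ?_,
    fun x => sub_self _, derivationBracket_jacobi D.toAddMonoidHom hD⟩
  · simp only [derivationBracket, map_add, add_mul, mul_add]; abel
  · simp only [derivationBracket, map_smul, smul_mul_assoc, mul_smul_comm, smul_sub]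
  · simp only [derivationBracket, map_add, add_mul, mul_add]; abel
  · simp only [derivationBracket, map_smul, smul_mul_assoc, mul_smul_comm, smul_sub]

theorem IsNijenhuis.derivationBracket {A : Type*} [NonUnitalNonAssocRing A] {D N : A →+ A}
    (hN : IsNijenhuis (· * ·) N) (hDN : ∀ x, D (N x) = N (D x)) :
    IsNijenhuis (derivationBracket D) N := by
  simp only [IsNijenhuis] at hN
  intro x y
  simp only [_root_.derivationBracket, hDN]
  rw [hN (D x) y, hN (D y) x, ← map_sub, map_sub N (D x * y)]
  congr 1
  abel

/-- Let `(A, *)` be a commutative associative algebra over `K` and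
`D` a derivation.  Then `[x,y]_D = D(x)·y − D(y)·x` is a Lie bracket on `A`, and any
Nijenhuis operator `N` on the associative algebra `(A, *)` commuting with `D` is a
Nijenhuis operator on the Lie algebra `(A, [·,·]_D)`. -/
theorem derivation_lie_bracket_and_nijenhuis
    {K : Type*} [Field K] {A : Type*} [NonUnitalCommRing A] [Module K A]
    [SMulCommClass K A A] [IsScalarTower K A A]
    (D : A →ₗ[K] A) (hD : ∀ x y : A, D (x * y) = D x * y + x * D y) :
    IsLieBracket K (fun x y => D x * y - D y * x) ∧
    (∀ N : A →ₗ[K] A,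
      (∀ x y : A, N x * N y = N (N x * y + x * N y - N (x * y))) →
      (∀ x : A, D (N x) = N (D x)) →
      ∀ x y : A,
        D (N x) * N y - D (N y) * N x
          = N ((D (N x) * y - D y * N x) + (D x * N y - D (N y) * x)
              - N (D x * y - D y * x))) :=
  ⟨isLieBracket_derivationBracket D hD, fun N hN hDN =>
    IsNijenhuis.derivationBracket (D := D.toAddMonoidHom) (N := N.toAddMonoidHom) hN hDN⟩
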